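/- The function g(x) = (x·tanh x)^{1/2} is strictly concave on (0,∞). Consequently, for every μ > 0 the dispersion function λ_μ is strictly concave on (0,∞) and its derivative λ_μ' is strictly decreasing on (0,∞). -/

import Mathlib

/-!
Write `h x = x tanh x`. Since `(√h)' = h' / (2√h)`, the second derivative of `√h` has the sign
of `2 h h'' - h' ^ 2`, which for `x > 0` equals
`-((sinh x cosh x - x) ^ 2 + 4 x ^ 2 sinh x ^ 2) / cosh x ^ 4 < 0`. Hence `(√h)'` is strictly
decreasing on `(0, ∞)`. For `r > 0`, `λ_μ r = √h (√μ r) / √μ`, so `λ_μ' r = (√h)' (√μ r)` is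
strictly decreasing as well, and a function with strictly decreasing derivative is strictly
concave.
-/

noncomputable section

/-- The dispersion function of the linear water wave problem. -/
def lamμ (μ : ℝ) (r : ℝ) : ℝ :=
  Real.sign r * Real.sqrt (r * Real.tanh (Real.sqrt μ * r) / Real.sqrt μ)

open Real Set

lemma Real.hasDerivAt_tanh (x : ℝ) : HasDerivAt tanh (1 / cosh x ^ 2) x := by
  have h := (hasDerivAt_sinh x).div (hasDerivAt_cosh x) (cosh_pos x).ne'
  rw [show sinh / cosh = tanh from funext fun y => (tanh_eq_sinh_div_cosh y).symm] at h
  exact h.congr_deriv (by rw [← cosh_sq_sub_sinh_sq x]; ring)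

lemma Real.tanh_pos {x : ℝ} (hx : 0 < x) : 0 < tanh x := by
  rw [tanh_eq_sinh_div_cosh]
  exact div_pos (sinh_pos_iff.mpr hx) (cosh_pos x)

lemma hasDerivAt_div_two_sqrt {h h' : ℝ → ℝ} {h'' x : ℝ} (hh : HasDerivAt h (h' x) x)
    (hh' : HasDerivAt h' h'' x) (hx : 0 < h x) :
    HasDerivAt (fun y => h' y / (2 * √(h y)))
      ((2 * h x * h'' - h' x ^ 2) / (4 * h x * √(h x))) x := by
  have hsqrt : 0 < √(h x) := sqrt_pos.mpr hx
  refine (hh'.div ((hh.sqrt hx.ne').const_mul 2) (by positivity)).congr_deriv ?_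
  field_simp
  rw [sq_sqrt hx.le]
  ring

section

variable {s : Set ℝ} {f f' : ℝ → ℝ}

lemma strictAntiOn_deriv_of_hasDerivAt (hf : ∀ x ∈ s, HasDerivAt f (f' x) x)
    (hf' : StrictAntiOn f' s) : StrictAntiOn (deriv f) s :=
  hf'.congr fun x hx => (hf x hx).deriv.symm

lemma strictConcaveOn_of_hasDerivAt (hs : Convex ℝ s) (hso : IsOpen s)
    (hf : ∀ x ∈ s, HasDerivAt f (f' x) x) (hf' : StrictAntiOn f' s) : StrictConcaveOn ℝ s f :=
  StrictAntiOn.strictConcaveOn_of_deriv hs (fun x hx => (hf x hx).continuousAt.continuousWithinAt)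
    (by rw [hso.interior_eq]; exact strictAntiOn_deriv_of_hasDerivAt hf hf')

end

lemma hasDerivAt_mul_tanh (x : ℝ) :
    HasDerivAt (fun y => y * tanh y) (tanh x + x / cosh x ^ 2) x :=
  ((hasDerivAt_id' x).mul (hasDerivAt_tanh x)).congr_deriv (by ring)

lemma hasDerivAt_tanh_add_div_cosh_sq (x : ℝ) :
    HasDerivAt (fun y => tanh y + y / cosh y ^ 2)
      (2 / cosh x ^ 2 - 2 * x * sinh x / cosh x ^ 3) x := by
  refine ((hasDerivAt_tanh x).add ((hasDerivAt_id' x).div ((hasDerivAt_cosh x).pow 2)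
    (pow_ne_zero 2 (cosh_pos x).ne'))).congr_deriv ?_
  simp only [Pi.pow_apply, Nat.cast_ofNat, Nat.add_one_sub_one, pow_one]
  field_simp
  ring

lemma two_mul_mul_tanh_mul_deriv2_sub_deriv_sq_neg {x : ℝ} (hx : 0 < x) :
    2 * (x * tanh x) * (2 / cosh x ^ 2 - 2 * x * sinh x / cosh x ^ 3)
      - (tanh x + x / cosh x ^ 2) ^ 2 < 0 := by
  have hc := cosh_pos x
  have hs : 0 < sinh x := sinh_pos_iff.mpr hx
  rw [tanh_eq_sinh_div_cosh]
  have key : 2 * (x * (sinh x / cosh x)) * (2 / cosh x ^ 2 - 2 * x * sinh x / cosh x ^ 3)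
      - (sinh x / cosh x + x / cosh x ^ 2) ^ 2
      = -((sinh x * cosh x - x) ^ 2 + 4 * x ^ 2 * sinh x ^ 2) / cosh x ^ 4 := by
    field_simp
    ring
  rw [key]
  apply div_neg_of_neg_of_pos _ (by positivity)
  nlinarith [sq_nonneg (sinh x * cosh x - x), mul_pos (pow_pos hx 2) (pow_pos hs 2)]

def sqrtMulTanhDeriv (x : ℝ) : ℝ :=
  (tanh x + x / cosh x ^ 2) / (2 * √(x * tanh x))

lemma hasDerivAt_sqrt_mul_tanh {x : ℝ} (hx : 0 < x) :
    HasDerivAt (fun y => √(y * tanh y)) (sqrtMulTanhDeriv x) x :=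
  (hasDerivAt_mul_tanh x).sqrt (mul_pos hx (tanh_pos hx)).ne'

lemma exists_neg_hasDerivAt_sqrtMulTanhDeriv {x : ℝ} (hx : 0 < x) :
    ∃ v < 0, HasDerivAt sqrtMulTanhDeriv v x := by
  have hpos : 0 < x * tanh x := mul_pos hx (tanh_pos hx)
  refine ⟨_, div_neg_of_neg_of_pos (two_mul_mul_tanh_mul_deriv2_sub_deriv_sq_neg hx)
    (by positivity),
    hasDerivAt_div_two_sqrt (hasDerivAt_mul_tanh x) (hasDerivAt_tanh_add_div_cosh_sq x) hpos⟩

lemma strictAntiOn_sqrtMulTanhDeriv : StrictAntiOn sqrtMulTanhDeriv (Ioi 0) := by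
  refine strictAntiOn_of_deriv_neg (convex_Ioi 0) (fun x hx => ?_) fun x hx => ?_
  · obtain ⟨v, -, hv⟩ := exists_neg_hasDerivAt_sqrtMulTanhDeriv hx
    exact hv.continuousAt.continuousWithinAt
  · rw [interior_Ioi] at hx
    obtain ⟨v, hv_neg, hv⟩ := exists_neg_hasDerivAt_sqrtMulTanhDeriv hx
    rwa [hv.deriv]

lemma lamμ_eq_of_pos {μ r : ℝ} (hμ : 0 < μ) (hr : 0 < r) :
    lamμ μ r = √(√μ * r * tanh (√μ * r)) / √μ := by
  have hsμ : 0 < √μ := sqrt_pos.mpr hμ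
  rw [lamμ, sign_of_pos hr, one_mul, ← sqrt_div' _ hμ.le]
  congr 1
  rw [div_eq_div_iff hsμ.ne' hμ.ne']
  linear_combination (-(r * tanh (√μ * r))) * mul_self_sqrt hμ.le

lemma hasDerivAt_lamμ {μ r : ℝ} (hμ : 0 < μ) (hr : 0 < r) :
    HasDerivAt (lamμ μ) (sqrtMulTanhDeriv (√μ * r)) r := by
  have hsμ : 0 < √μ := sqrt_pos.mpr hμ
  have h := ((hasDerivAt_sqrt_mul_tanh (mul_pos hsμ hr)).comp r
    ((hasDerivAt_id' r).const_mul √μ)).div_const √μ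
  rw [mul_one, mul_div_cancel_right₀ _ hsμ.ne'] at h
  refine h.congr_of_eventuallyEq ?_
  filter_upwards [Ioi_mem_nhds hr] with y hy using lamμ_eq_of_pos hμ hy

theorem sqrt_mul_tanh_strictConcave_and_lamμ_strictConcave :
    StrictConcaveOn ℝ (Set.Ioi (0 : ℝ)) (fun x => Real.sqrt (x * Real.tanh x))
    ∧ ∀ μ : ℝ, 0 < μ →
        StrictConcaveOn ℝ (Set.Ioi (0 : ℝ)) (lamμ μ)
        ∧ StrictAntiOn (deriv (lamμ μ)) (Set.Ioi (0 : ℝ)) := by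
  refine ⟨strictConcaveOn_of_hasDerivAt (convex_Ioi 0) isOpen_Ioi
    (fun x hx => hasDerivAt_sqrt_mul_tanh hx) strictAntiOn_sqrtMulTanhDeriv, fun μ hμ => ?_⟩
  have hsμ : 0 < √μ := sqrt_pos.mpr hμ
  have hanti : StrictAntiOn (fun r => sqrtMulTanhDeriv (√μ * r)) (Ioi 0) :=
    fun a ha b hb hab => strictAntiOn_sqrtMulTanhDeriv (mul_pos hsμ ha) (mul_pos hsμ hb)
      (mul_lt_mul_of_pos_left hab hsμ)
  have hderiv : ∀ r ∈ Ioi (0 : ℝ), HasDerivAt (lamμ μ) (sqrtMulTanhDeriv (√μ * r)) r :=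
    fun r hr => hasDerivAt_lamμ hμ hr
  exact ⟨strictConcaveOn_of_hasDerivAt (convex_Ioi 0) isOpen_Ioi hderiv hanti,
    strictAntiOn_deriv_of_hasDerivAt hderiv hanti⟩
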